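/- Let 𝓑 be a basis of a Banach space X, 𝐧 a strictly increasing sequence of positive integers, and λ > 1 a real number. The following are equivalent: (i) 𝓑 is (λ, 𝐧, strong partially greedy); (ii) 𝓑 is quasi-greedy and (λ, 𝐧, PSLC); (iii) 𝓑 is quasi-greedy and (λ, 𝐧, superconservative); (iv) 𝓑 is quasi-greedy and (λ, 𝐧, conservative). -/

import Mathlib

open scoped BigOperators ENNReal NNReal

/-- The collection `𝕋(𝐧)`: pairs of finite sets `(A, D)` with `A ⊆ 𝐧`, `|A| ≤ |D|`
and `A < D ∩ 𝐧`. -/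
def TPair (seq : ℕ → ℕ) (A D : Finset ℕ) : Prop :=
  (↑A : Set ℕ) ⊆ Set.range seq ∧ A.card ≤ D.card ∧
    ∀ a ∈ A, ∀ d ∈ D, d ∈ Set.range seq → a < d

/-- The collection `𝕊(𝐧)`: pairs of finite sets `(A, D)` with `A ⊆ 𝐧` and `|A| ≤ |D|`. -/
def SPair (seq : ℕ → ℕ) (A D : Finset ℕ) : Prop :=
  (↑A : Set ℕ) ⊆ Set.range seq ∧ A.card ≤ D.card

/-- The interval `{n_{k+1}, …, n_{k+m}}` of `m` consecutive terms of the sequence `seq`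
(0-indexed: `seq k, …, seq (k+m-1)`). -/
def intervalSet (seq : ℕ → ℕ) (k m : ℕ) : Finset ℕ :=
  (Finset.range m).image fun i => seq (k + i)

/-- The (1-based) index `ι(max A)` of the largest element of `A` in the sequence `seq`
(`0` if `A` is empty). -/
noncomputable def iotaMax (seq : ℕ → ℕ) (A : Finset ℕ) : ℕ :=
  if h : A.Nonempty then sInf {i | seq i = A.max' h} + 1 else 0

/-- The collection `𝕋^ω(𝐧)`: pairs of finite sets `(A, D)` with `A ⊆ 𝐧`, `ω(A) ≤ ω(D)`
and `A < D ∩ 𝐧`. -/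
def WTPair (w : Set ℕ → ℝ≥0∞) (seq : ℕ → ℕ) (A D : Finset ℕ) : Prop :=
  (↑A : Set ℕ) ⊆ Set.range seq ∧ w (↑A : Set ℕ) ≤ w (↑D : Set ℕ) ∧
    ∀ a ∈ A, ∀ d ∈ D, d ∈ Set.range seq → a < d

/-- A (semi-normalized) basis `(e_n)` of a Banach space `X`, together with its biorthogonal
functionals `(e_n^*)`: the span of the `e_n` is norm-dense, `e_j^*(e_k) = δ_{jk}`, and the
norms of the `e_n` and `e_n^*` are bounded above and away from zero. -/
structure BasisOf (𝕜 : Type*) (X : Type*) [RCLike 𝕜] [NormedAddCommGroup X]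
    [NormedSpace 𝕜 X] where
  e : ℕ → X
  coord : ℕ → X →L[𝕜] 𝕜
  dense_span : Dense (↑(Submodule.span 𝕜 (Set.range e)) : Set X)
  biorth : ∀ j k : ℕ, coord j (e k) = if j = k then (1 : 𝕜) else 0
  norm_bounds : ∃ c₁ c₂ : ℝ, 0 < c₁ ∧ (∀ n, c₁ ≤ ‖e n‖ ∧ c₁ ≤ ‖coord n‖) ∧
    ∀ n, ‖e n‖ ≤ c₂ ∧ ‖coord n‖ ≤ c₂

namespace BasisOf

variable {𝕜 : Type*} {X : Type*} [RCLike 𝕜] [NormedAddCommGroup X] [NormedSpace 𝕜 X]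
variable (B : BasisOf 𝕜 X)

/-- The projection `P_A(x) = ∑_{n ∈ A} e_n^*(x) e_n`. -/
noncomputable def proj (A : Finset ℕ) (x : X) : X := ∑ n ∈ A, B.coord n x • B.e n

/-- `1_{εA} = ∑_{n ∈ A} ε_n e_n`. -/
noncomputable def sgnSum (ε : ℕ → 𝕜) (A : Finset ℕ) : X := ∑ n ∈ A, ε n • B.e n

/-- `1_A = ∑_{n ∈ A} e_n`. -/
noncomputable def ones (A : Finset ℕ) : X := ∑ n ∈ A, B.e n

/-- `P^𝐧_m(x) = ∑_{i=1}^m e_{n_i}^*(x) e_{n_i}`, the projection on the first `m` terms of the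
subsequence given by `seq`. -/
noncomputable def projSeq (seq : ℕ → ℕ) (m : ℕ) (x : X) : X :=
  ∑ i ∈ Finset.range m, B.coord (seq i) x • B.e (seq i)

/-- `A` is a greedy set of `x`: the coefficients inside `A` dominate those outside. -/
def IsGreedySet (x : X) (A : Finset ℕ) : Prop :=
  ∀ a ∈ A, ∀ b ∉ A, ‖B.coord b x‖ ≤ ‖B.coord a x‖

/-- The support `{n : e_n^*(x) ≠ 0}`. -/
def supp (x : X) : Set ℕ := {n | B.coord n x ≠ 0}

/-- `𝓑` is `C`-(`𝐧`, strong partially greedy):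
`‖x - G_m(x)‖ ≤ C ⋅ σ̂^𝐧_m(x)` for all `x`, all `m ≥ 1` and all greedy sums. -/
def SPGWith (seq : ℕ → ℕ) (C : ℝ) : Prop :=
  ∀ x : X, ∀ m : ℕ, 1 ≤ m → ∀ A : Finset ℕ, A.card = m → B.IsGreedySet x A →
    ∀ k : ℕ, k ≤ m → ‖x - B.proj A x‖ ≤ C * ‖x - B.projSeq seq k x‖

/-- `𝓑` is (`𝐧`, strong partially greedy). -/
def SPG (seq : ℕ → ℕ) : Prop := ∃ C : ℝ, 1 ≤ C ∧ B.SPGWith seq C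

/-- `𝓑` is quasi-greedy with constant `C`. -/
def QuasiGreedyWith (C : ℝ) : Prop :=
  ∀ x : X, ∀ A : Finset ℕ, A.Nonempty → B.IsGreedySet x A → ‖B.proj A x‖ ≤ C * ‖x‖

/-- `𝓑` is quasi-greedy. -/
def QuasiGreedy : Prop := ∃ C : ℝ, B.QuasiGreedyWith C

/-- `𝓑` is suppression quasi-greedy with constant `C`. -/
def SuppQGWith (C : ℝ) : Prop :=
  ∀ x : X, ∀ A : Finset ℕ, A.Nonempty → B.IsGreedySet x A → ‖x - B.proj A x‖ ≤ C * ‖x‖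

/-- `𝓑` is `C`-(`𝐧`, PSLC). -/
def PSLCWith (seq : ℕ → ℕ) (C : ℝ) : Prop :=
  ∀ x : X, (∀ n, ‖B.coord n x‖ ≤ 1) → ∀ A D : Finset ℕ, TPair seq A D →
    (∀ d ∈ D, B.coord d x = 0) →
    (∀ a ∈ A, ∀ j : ℕ, (j ∈ D ∨ B.coord j x ≠ 0) → j ∈ Set.range seq → a < j) →
    ∀ ε δ : ℕ → 𝕜, (∀ n, ‖ε n‖ = 1) → (∀ n, ‖δ n‖ = 1) →
      ‖x + B.sgnSum ε A‖ ≤ C * ‖x + B.sgnSum δ D‖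

/-- `𝓑` is (`𝐧`, PSLC). -/
def PSLC (seq : ℕ → ℕ) : Prop := ∃ C : ℝ, 1 ≤ C ∧ B.PSLCWith seq C

/-- `𝓑` is (`𝐧`, superconservative) with constant `C`. -/
def SuperconservativeWith (seq : ℕ → ℕ) (C : ℝ) : Prop :=
  ∀ A D : Finset ℕ, TPair seq A D →
    ∀ ε δ : ℕ → 𝕜, (∀ n, ‖ε n‖ = 1) → (∀ n, ‖δ n‖ = 1) →
      ‖B.sgnSum ε A‖ ≤ C * ‖B.sgnSum δ D‖

/-- `𝓑` is (`𝐧`, superconservative). -/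
def Superconservative (seq : ℕ → ℕ) : Prop :=
  ∃ C : ℝ, 0 < C ∧ B.SuperconservativeWith seq C

/-- `𝓑` is (`𝐧`, conservative) with constant `C`. -/
def ConservativeWith (seq : ℕ → ℕ) (C : ℝ) : Prop :=
  ∀ A D : Finset ℕ, TPair seq A D → ‖B.ones A‖ ≤ C * ‖B.ones D‖

/-- `𝓑` is (`𝐧`, conservative). -/
def Conservative (seq : ℕ → ℕ) : Prop := ∃ C : ℝ, 0 < C ∧ B.ConservativeWith seq C

/-- `𝓑` is (`𝐧`, democratic) with constant `C`. -/
def DemocraticWith (seq : ℕ → ℕ) (C : ℝ) : Prop :=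
  ∀ A D : Finset ℕ, SPair seq A D → ‖B.ones A‖ ≤ C * ‖B.ones D‖

/-- `𝓑` is (`𝐧`, democratic). -/
def Democratic (seq : ℕ → ℕ) : Prop := ∃ C : ℝ, B.DemocraticWith seq C

/-- `𝓑` is (`𝐧`, almost greedy) with constant `C`:
`‖x - G_m(x)‖ ≤ C σ̃^𝐧_m(x)` where `σ̃^𝐧_m(x) = inf {‖x - P_D(x)‖ : D ⊆ 𝐧, |D| = m}`. -/
def AlmostGreedyWith (seq : ℕ → ℕ) (C : ℝ) : Prop :=
  ∀ x : X, ∀ m : ℕ, 1 ≤ m → ∀ A : Finset ℕ, A.card = m → B.IsGreedySet x A →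
    ∀ D : Finset ℕ, (↑D : Set ℕ) ⊆ Set.range seq → D.card = m →
      ‖x - B.proj A x‖ ≤ C * ‖x - B.proj D x‖

/-- `𝓑` is (`𝐧`, almost greedy). -/
def AlmostGreedy (seq : ℕ → ℕ) : Prop := ∃ C : ℝ, 1 ≤ C ∧ B.AlmostGreedyWith seq C

/-- `𝓑` is 1-unconditional. -/
def OneUnconditional : Prop :=
  ∀ (F : Finset ℕ) (a b : ℕ → 𝕜), (∀ n, ‖a n‖ ≤ ‖b n‖) →
    ‖∑ n ∈ F, a n • B.e n‖ ≤ ‖∑ n ∈ F, b n • B.e n‖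

/-- `𝓑` is `C`-(`𝐧`, consecutive almost greedy) of type I. -/
def CAGIWith (seq : ℕ → ℕ) (C : ℝ) : Prop :=
  ∀ x : X, ∀ m : ℕ, 1 ≤ m → ∀ A : Finset ℕ, A.card = m → B.IsGreedySet x A →
    ∀ k : ℕ, ‖x - B.proj A x‖ ≤ C * ‖x - B.proj (intervalSet seq k m) x‖

/-- `𝓑` is `C`-(`𝐧`, consecutive almost greedy) of type II. -/
def CAGIIWith (seq : ℕ → ℕ) (C : ℝ) : Prop :=
  ∀ x : X, ∀ m : ℕ, 1 ≤ m → ∀ A : Finset ℕ, A.card = m → B.IsGreedySet x A →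
    ∀ k p : ℕ, ((↑(intervalSet seq k p) : Set ℕ) ∩ B.supp x).ncard ≤ m →
      ‖x - B.proj A x‖ ≤ C * ‖x - B.proj (intervalSet seq k p) x‖

/-- `𝓑` is `C`-(`𝐧`, RSLC). -/
def RSLCWith (seq : ℕ → ℕ) (C : ℝ) : Prop :=
  ∀ x : X, (∀ n, ‖B.coord n x‖ ≤ 1) → ∀ A D : Finset ℕ, SPair seq A D →
    (∀ d ∈ D, B.coord d x = 0) →
    (∀ j : ℕ, (j ∈ D ∨ B.coord j x ≠ 0) → j ∈ Set.range seq →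
      (∀ a ∈ A, j < a) ∨ (∀ a ∈ A, a < j)) →
    ∀ ε δ : ℕ → 𝕜, (∀ n, ‖ε n‖ = 1) → (∀ n, ‖δ n‖ = 1) →
      ‖x + B.sgnSum ε A‖ ≤ C * ‖x + B.sgnSum δ D‖

/-- `𝓑` is `C`-(`𝐧`, SLC). -/
def SLCWith (seq : ℕ → ℕ) (C : ℝ) : Prop :=
  ∀ x : X, (∀ n, ‖B.coord n x‖ ≤ 1) → ∀ A D : Finset ℕ, SPair seq A D →
    Disjoint A D → (∀ a ∈ A, B.coord a x = 0) → (∀ d ∈ D, B.coord d x = 0) →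
    ∀ ε δ : ℕ → 𝕜, (∀ n, ‖ε n‖ = 1) → (∀ n, ‖δ n‖ = 1) →
      ‖x + B.sgnSum ε A‖ ≤ C * ‖x + B.sgnSum δ D‖

/-- The Lebesgue-type parameter `L̂^𝐧_m`: the least constant `C ∈ [0,∞]` with
`‖x - G_m(x)‖ ≤ C σ̂^𝐧_m(x)` for all `x` and all greedy sums `G_m(x)`. -/
noncomputable def Lhat (seq : ℕ → ℕ) (m : ℕ) : ℝ≥0∞ :=
  sInf {C : ℝ≥0∞ | ∀ (x : X) (A : Finset ℕ), A.card = m → B.IsGreedySet x A →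
    ∀ k : ℕ, k ≤ m →
      (‖x - B.proj A x‖₊ : ℝ≥0∞) ≤ C * (‖x - B.projSeq seq k x‖₊ : ℝ≥0∞)}

/-- The parameter `g_m^c`. -/
noncomputable def gc (m : ℕ) : ℝ≥0∞ :=
  ⨆ (x : X) (_ : x ≠ 0) (A : Finset ℕ) (_ : A.card ≤ m) (_ : B.IsGreedySet x A),
    (‖x - B.proj A x‖₊ : ℝ≥0∞) / (‖x‖₊ : ℝ≥0∞)

/-- The parameter `g̃_m`. -/
noncomputable def gtilde (m : ℕ) : ℝ≥0∞ :=
  ⨆ (x : X) (_ : x ≠ 0) (A : Finset ℕ) (A' : Finset ℕ) (_ : A ⊆ A') (_ : A.card < A'.card)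
    (_ : A'.card ≤ m) (_ : B.IsGreedySet x A) (_ : B.IsGreedySet x A'),
    (‖B.proj A' x - B.proj A x‖₊ : ℝ≥0∞) / (‖x‖₊ : ℝ≥0∞)

/-- The parameter `sc^𝐧_m`. -/
noncomputable def scParam (seq : ℕ → ℕ) (m : ℕ) : ℝ≥0∞ :=
  ⨆ (A : Finset ℕ) (D : Finset ℕ) (_ : TPair seq A D) (_ : D.card ≤ m)
    (_ : ∀ a ∈ A, a ≤ seq (m - 1)) (ε : ℕ → 𝕜) (_ : ∀ n, ‖ε n‖ = 1)
    (δ : ℕ → 𝕜) (_ : ∀ n, ‖δ n‖ = 1),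
    (‖B.sgnSum ε A‖₊ : ℝ≥0∞) / (‖B.sgnSum δ D‖₊ : ℝ≥0∞)

/-- The parameter `ω^𝐧_m`. -/
noncomputable def omegaParam (seq : ℕ → ℕ) (m : ℕ) : ℝ≥0∞ :=
  ⨆ (x : X) (_ : ∀ n, ‖B.coord n x‖ ≤ 1) (A : Finset ℕ) (D : Finset ℕ)
    (_ : (↑A : Set ℕ) ⊆ Set.range seq) (_ : A.card ≤ D.card) (_ : D.card ≤ m)
    (_ : ∀ a ∈ A, a ≤ seq (m - 1)) (_ : ∀ d ∈ D, B.coord d x = 0)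
    (_ : ∀ a ∈ A, ∀ j : ℕ, (j ∈ D ∨ B.coord j x ≠ 0) → j ∈ Set.range seq → a < j)
    (ε : ℕ → 𝕜) (_ : ∀ n, ‖ε n‖ = 1) (δ : ℕ → 𝕜) (_ : ∀ n, ‖δ n‖ = 1),
    (‖x + B.sgnSum ε A‖₊ : ℝ≥0∞) / (‖x + B.sgnSum δ D‖₊ : ℝ≥0∞)

/-- The parameter `ω̂^𝐧_m`. -/
noncomputable def omegaHatParam (seq : ℕ → ℕ) (m : ℕ) : ℝ≥0∞ :=
  ⨆ (x : X) (_ : ∀ n, ‖B.coord n x‖ ≤ 1) (A : Finset ℕ) (D : Finset ℕ)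
    (_ : (↑A : Set ℕ) ⊆ Set.range seq) (_ : A.card ≤ D.card) (_ : D.card ≤ m)
    (_ : ∀ a ∈ A, a ≤ seq (m - 1))
    (_ : ∀ d ∈ D, B.coord d (x - B.proj A x) = 0)
    (_ : ∀ a ∈ A, ∀ j : ℕ, (j ∈ D ∨ B.coord j (x - B.proj A x) ≠ 0) →
      j ∈ Set.range seq → a < j)
    (ε : ℕ → 𝕜) (_ : ∀ n, ‖ε n‖ = 1),
    (‖x‖₊ : ℝ≥0∞) / (‖x - B.proj A x + B.sgnSum ε D‖₊ : ℝ≥0∞)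

/-- `κ = sup_{j,k} ‖e_j‖ ‖e_k^*‖`. -/
noncomputable def kappa : ℝ≥0∞ :=
  ⨆ (j : ℕ) (k : ℕ), ((‖B.e j‖₊ * ‖B.coord k‖₊ : ℝ≥0) : ℝ≥0∞)

/-- `𝓑` is `𝐬`-(`𝐧`, strong partially greedy) with constant `C`:
the strong partially greedy inequality for all orders `m` in the sequence `s`. -/
def SPGOnWith (seq : ℕ → ℕ) (s : ℕ → ℕ) (C : ℝ) : Prop :=
  ∀ x : X, ∀ i : ℕ, ∀ A : Finset ℕ, A.card = s i → B.IsGreedySet x A →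
    ∀ k : ℕ, k ≤ s i → ‖x - B.proj A x‖ ≤ C * ‖x - B.projSeq seq k x‖

/-- `𝓑` is (`λ`, `𝐧`, strong partially greedy). -/
def LamSPG (seq : ℕ → ℕ) (lam : ℝ) : Prop :=
  ∃ C : ℝ, 1 ≤ C ∧ ∀ x : X, ∀ m : ℕ, 1 ≤ m →
    ∀ A : Finset ℕ, A.card = ⌈lam * (m : ℝ)⌉₊ → B.IsGreedySet x A →
      ∀ k : ℕ, k ≤ m → ‖x - B.proj A x‖ ≤ C * ‖x - B.projSeq seq k x‖

/-- `𝓑` is (`λ`, `𝐧`, PSLC). -/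
def LamPSLC (seq : ℕ → ℕ) (lam : ℝ) : Prop :=
  ∃ C : ℝ, 1 ≤ C ∧ ∀ x : X, (∀ n, ‖B.coord n x‖ ≤ 1) →
    ∀ A D : Finset ℕ, (↑A : Set ℕ) ⊆ Set.range seq → A.card ≤ D.card →
      (lam - 1) * (iotaMax seq A : ℝ) + A.card ≤ D.card →
      (∀ d ∈ D, B.coord d x = 0) →
      (∀ a ∈ A, ∀ j : ℕ, (j ∈ D ∨ B.coord j x ≠ 0) → j ∈ Set.range seq → a < j) →
      ∀ ε δ : ℕ → 𝕜, (∀ n, ‖ε n‖ = 1) → (∀ n, ‖δ n‖ = 1) →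
        ‖x + B.sgnSum ε A‖ ≤ C * ‖x + B.sgnSum δ D‖

/-- `𝓑` is (`λ`, `𝐧`, superconservative). -/
def LamSuperconservative (seq : ℕ → ℕ) (lam : ℝ) : Prop :=
  ∃ C : ℝ, 0 < C ∧ ∀ A D : Finset ℕ, TPair seq A D →
    (lam - 1) * (iotaMax seq A : ℝ) + A.card ≤ D.card →
    ∀ ε δ : ℕ → 𝕜, (∀ n, ‖ε n‖ = 1) → (∀ n, ‖δ n‖ = 1) →
      ‖B.sgnSum ε A‖ ≤ C * ‖B.sgnSum δ D‖

/-- `𝓑` is (`λ`, `𝐧`, conservative). -/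
def LamConservative (seq : ℕ → ℕ) (lam : ℝ) : Prop :=
  ∃ C : ℝ, 0 < C ∧ ∀ A D : Finset ℕ, TPair seq A D →
    (lam - 1) * (iotaMax seq A : ℝ) + A.card ≤ D.card →
    ‖B.ones A‖ ≤ C * ‖B.ones D‖

/-- `𝓑` is `ω`-(`𝐧`, strong partially greedy) for the weight on sets `w`. -/
def WSPG (seq : ℕ → ℕ) (w : Set ℕ → ℝ≥0∞) : Prop :=
  ∃ C : ℝ, 1 ≤ C ∧ ∀ x : X, ∀ m : ℕ, 1 ≤ m → ∀ A : Finset ℕ, A.card = m →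
    B.IsGreedySet x A → ∀ m' : ℕ,
      w (↑((Finset.range m').image seq \ A) : Set ℕ) ≤
        w (↑(A \ (Finset.range m').image seq) : Set ℕ) →
      ‖x - B.proj A x‖ ≤ C * ‖x - B.proj ((Finset.range m').image seq) x‖

/-- `𝓑` is `ω`-(`𝐧`, PSLC). -/
def WPSLC (seq : ℕ → ℕ) (w : Set ℕ → ℝ≥0∞) : Prop :=
  ∃ C : ℝ, 1 ≤ C ∧ ∀ x : X, (∀ n, ‖B.coord n x‖ ≤ 1) →
    ∀ A D : Finset ℕ, WTPair w seq A D →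
      (∀ d ∈ D, B.coord d x = 0) →
      (∀ a ∈ A, ∀ j : ℕ, (j ∈ D ∨ B.coord j x ≠ 0) → j ∈ Set.range seq → a < j) →
      ∀ ε δ : ℕ → 𝕜, (∀ n, ‖ε n‖ = 1) → (∀ n, ‖δ n‖ = 1) →
        ‖x + B.sgnSum ε A‖ ≤ C * ‖x + B.sgnSum δ D‖

/-- `𝓑` is `ω`-(`𝐧`, superconservative). -/
def WSuperconservative (seq : ℕ → ℕ) (w : Set ℕ → ℝ≥0∞) : Prop :=
  ∃ C : ℝ, 0 < C ∧ ∀ A D : Finset ℕ, WTPair w seq A D →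
    ∀ ε δ : ℕ → 𝕜, (∀ n, ‖ε n‖ = 1) → (∀ n, ‖δ n‖ = 1) →
      ‖B.sgnSum ε A‖ ≤ C * ‖B.sgnSum δ D‖

/-- `𝓑` is `ω`-(`𝐧`, conservative). -/
def WConservative (seq : ℕ → ℕ) (w : Set ℕ → ℝ≥0∞) : Prop :=
  ∃ C : ℝ, 0 < C ∧ ∀ A D : Finset ℕ, WTPair w seq A D → ‖B.ones A‖ ≤ C * ‖B.ones D‖

end BasisOf

/-- A Banach space over `𝕜` equipped with a basis. -/
structure BanachWithBasis (𝕜 : Type*) [RCLike 𝕜] where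
  carrier : Type
  [grp : NormedAddCommGroup carrier]
  [mod : NormedSpace 𝕜 carrier]
  [comp : CompleteSpace carrier]
  basis : BasisOf 𝕜 carrier

attribute [instance] BanachWithBasis.grp BanachWithBasis.mod BanachWithBasis.comp

/-!
Testing the strong partially greedy inequality at `k = 0` on a greedy set enlarged by a bounded
number of terms gives quasi-greediness. Testing it on `y = 1_{ηA} + 1_{𝐧_{≤k} ∖ A} + 1_{δD}`,
`k = ι(max A)`, with a greedy set that swallows `𝐧_{≤k} ∖ A` and part of `D`, gives
superconservativity: what is left of `y` still contains `1_{εA}` as a greedy part, while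
`y - P^𝐧_k y = 1_{δD}`. PSLC follows from superconservativity because `D` is a greedy set of
`x + 1_{δD}`.

Conversely, with `B₀ = 𝐧_{≤k}` and `z = x - P^𝐧_k x`, write
`x - G(x) = (z - P_{A∖B₀} z) + P_{B₀∖A} x`. The first term is controlled by quasi-greediness. The
coefficients in the second are at most `t = min_A |e_n^*(x)|`, so by convexity it is bounded by
`t ‖1_{B₀∖A}‖`, by conservativity by `t ‖1_E‖` for a suitable `E ⊆ A ∖ B₀`, and finally by `‖z‖`
through the Abel summation bound `t ‖1_{sgn(z) F}‖ ≤ 2C ‖z‖` for greedy sets `F` of `z` whose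
coefficients are at least `t`.
-/

theorem ceil_mul_eq_ceil_sub_one_mul_add {lam : ℝ} (hlam : 1 ≤ lam) (m : ℕ) :
    ⌈lam * m⌉₊ = ⌈(lam - 1) * m⌉₊ + m := by
  rw [← Nat.ceil_add_natCast (mul_nonneg (sub_nonneg.2 hlam) m.cast_nonneg)]
  ring_nf

theorem exists_le_ceil_mul_le {lam : ℝ} (hlam : 0 < lam) {N : ℕ} (hN : 1 ≤ N) :
    ∃ m : ℕ, 1 ≤ m ∧ N ≤ ⌈lam * m⌉₊ ∧ ⌈lam * m⌉₊ ≤ N + ⌈lam⌉₊ := by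
  have hNpos : (0 : ℝ) < N := by exact_mod_cast hN
  refine ⟨⌈N / lam⌉₊, Nat.one_le_iff_ne_zero.2 (Nat.ceil_pos.2 (by positivity)).ne', ?_, ?_⟩
  · have : (N : ℝ) ≤ lam * ⌈N / lam⌉₊ := (div_le_iff₀' hlam).1 (Nat.le_ceil _)
    exact_mod_cast this.trans (Nat.le_ceil _)
  · refine Nat.ceil_le.2 ?_
    push_cast
    calc lam * ⌈N / lam⌉₊ ≤ lam * (N / lam + 1) :=
          mul_le_mul_of_nonneg_left (Nat.ceil_lt_add_one (by positivity)).le hlam.le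
      _ = N + lam := by field_simp
      _ ≤ N + ⌈lam⌉₊ := by gcongr; exact Nat.le_ceil lam

section Sequence

variable {seq : ℕ → ℕ}

def initSeg (seq : ℕ → ℕ) (k : ℕ) : Finset ℕ := (Finset.range k).image seq

theorem mem_initSeg {k n : ℕ} : n ∈ initSeg seq k ↔ ∃ i < k, seq i = n := by
  simp [initSeg]

theorem card_initSeg (hseq : StrictMono seq) (k : ℕ) : (initSeg seq k).card = k := by
  rw [initSeg, Finset.card_image_of_injective _ hseq.injective, Finset.card_range]

theorem iotaMax_le_of_subset_initSeg {A : Finset ℕ} {k : ℕ} (hA : A ⊆ initSeg seq k) :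
    iotaMax seq A ≤ k := by
  rw [iotaMax]
  split_ifs with hne
  · obtain ⟨i, hik, hi⟩ := mem_initSeg.1 (hA (A.max'_mem hne))
    have : sInf {i | seq i = A.max' hne} ≤ i := Nat.sInf_le hi
    omega
  · exact k.zero_le

theorem iotaMax_eq (hseq : StrictMono seq) {A : Finset ℕ} (hne : A.Nonempty) {j : ℕ}
    (hj : seq j = A.max' hne) : iotaMax seq A = j + 1 := by
  have hmem : seq (sInf {i | seq i = A.max' hne}) = A.max' hne :=
    Nat.sInf_mem (s := {i | seq i = A.max' hne}) ⟨j, hj⟩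
  rw [iotaMax, dif_pos hne, hseq.injective (hmem.trans hj.symm)]

theorem subset_initSeg_iotaMax (hseq : StrictMono seq) {A : Finset ℕ}
    (hA : ↑A ⊆ Set.range seq) : A ⊆ initSeg seq (iotaMax seq A) := by
  intro a ha
  have hne : A.Nonempty := ⟨a, ha⟩
  obtain ⟨j, hj⟩ := hA (A.max'_mem hne)
  obtain ⟨i, rfl⟩ := hA ha
  rw [iotaMax_eq hseq hne hj, mem_initSeg]
  exact ⟨i, Nat.lt_succ_of_le (hseq.le_iff_le.1 (hj ▸ A.le_max' _ ha)), rfl⟩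

theorem exists_ge_of_mem_initSeg_iotaMax (hseq : StrictMono seq) {A : Finset ℕ}
    (hA : ↑A ⊆ Set.range seq) {b : ℕ} (hb : b ∈ initSeg seq (iotaMax seq A)) :
    ∃ a ∈ A, b ≤ a := by
  rcases A.eq_empty_or_nonempty with rfl | hne
  · simp [iotaMax, initSeg] at hb
  obtain ⟨j, hj⟩ := hA (A.max'_mem hne)
  obtain ⟨i, hi, rfl⟩ := mem_initSeg.1 (iotaMax_eq hseq hne hj ▸ hb)
  exact ⟨A.max' hne, A.max'_mem hne, hj ▸ hseq.monotone (Nat.le_of_lt_succ hi)⟩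

theorem exists_subset_sdiff_initSeg_tPair (hseq : StrictMono seq) {lam : ℝ}
    (hlam : 1 ≤ lam) {A : Finset ℕ} {k m : ℕ} (hkm : k ≤ m) (hA : A.card = ⌈lam * m⌉₊) :
    ∃ E ⊆ A \ initSeg seq k, TPair seq (initSeg seq k \ A) E ∧
      (lam - 1) * iotaMax seq (initSeg seq k \ A) + (initSeg seq k \ A).card ≤ E.card := by
  have hG := Finset.card_sdiff_add_card_inter (initSeg seq k) A
  have hF := Finset.card_sdiff_add_card_inter A (initSeg seq k)
  rw [card_initSeg hseq, Finset.inter_comm] at hG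
  set G := initSeg seq k \ A
  have hceil : ⌈(lam - 1) * iotaMax seq G⌉₊ ≤ ⌈(lam - 1) * m⌉₊ := by
    have : (iotaMax seq G : ℝ) ≤ m := by
      exact_mod_cast (iotaMax_le_of_subset_initSeg Finset.sdiff_subset).trans hkm
    exact Nat.ceil_mono (mul_le_mul_of_nonneg_left this (sub_nonneg.2 hlam))
  rw [ceil_mul_eq_ceil_sub_one_mul_add hlam] at hA
  obtain ⟨E, hE, hEcard⟩ := Finset.exists_subset_card_eq
    (show ⌈(lam - 1) * iotaMax seq G⌉₊ + G.card ≤ (A \ initSeg seq k).card by omega)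
  refine ⟨E, hE, ⟨fun b hb => ?_, by omega, fun b hb d hd ⟨i, hi⟩ => ?_⟩, ?_⟩
  · obtain ⟨j, -, hj⟩ := mem_initSeg.1 (Finset.mem_sdiff.1 hb).1
    exact ⟨j, hj⟩
  · obtain ⟨j, hj, rfl⟩ := mem_initSeg.1 (Finset.mem_sdiff.1 hb).1
    subst hi
    have hki : k ≤ i :=
      not_lt.1 fun hik => (Finset.mem_sdiff.1 (hE hd)).2 (mem_initSeg.2 ⟨i, hik, rfl⟩)
    exact hseq (hj.trans_le hki)
  · rw [hEcard]
    push_cast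
    linarith [Nat.le_ceil ((lam - 1) * iotaMax seq G)]

end Sequence

namespace BasisOf

variable {𝕜 X : Type*} [RCLike 𝕜] [NormedAddCommGroup X] [NormedSpace 𝕜 X] {B : BasisOf 𝕜 X}

section Coordinates

theorem coord_sum (F : Finset ℕ) (c : ℕ → 𝕜) (j : ℕ) :
    B.coord j (∑ n ∈ F, c n • B.e n) = if j ∈ F then c j else 0 := by
  simp [B.biorth]

theorem coord_proj (A : Finset ℕ) (x : X) (j : ℕ) :
    B.coord j (B.proj A x) = if j ∈ A then B.coord j x else 0 :=
  coord_sum A _ j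

theorem coord_sgnSum (η : ℕ → 𝕜) (F : Finset ℕ) (j : ℕ) :
    B.coord j (B.sgnSum η F) = if j ∈ F then η j else 0 :=
  coord_sum F η j

theorem sgnSum_one (A : Finset ℕ) : B.sgnSum (fun _ => 1) A = B.ones A := by
  simp [sgnSum, ones]

theorem proj_sgnSum (η : ℕ → 𝕜) (S F : Finset ℕ) :
    B.proj S (B.sgnSum η F) = B.sgnSum η (S ∩ F) := by
  rw [proj]
  simp only [coord_sgnSum, ite_smul, zero_smul]
  rw [Finset.sum_ite_mem, sgnSum]

theorem sgnSum_sub_proj_sgnSum (η : ℕ → 𝕜) (S F : Finset ℕ) :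
    B.sgnSum η F - B.proj S (B.sgnSum η F) = B.sgnSum η (F \ S) := by
  rw [proj_sgnSum, sub_eq_iff_eq_add', Finset.inter_comm, sgnSum, sgnSum, sgnSum,
    Finset.sum_inter_add_sum_sdiff]

theorem proj_sub_proj (F D : Finset ℕ) (x : X) :
    B.proj F (x - B.proj D x) = B.proj (F \ D) x := by
  rw [proj]
  simp only [map_sub, coord_proj, sub_ite, sub_zero, sub_self, ite_smul, zero_smul]
  rw [Finset.sum_ite, Finset.sum_const_zero, zero_add, proj]
  congr 1
  ext n
  simp

theorem proj_add_proj_sdiff (A D : Finset ℕ) (x : X) :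
    B.proj A x + B.proj (D \ A) x = B.proj (A ∪ D) x := by
  rw [proj, proj, proj, ← Finset.sum_union Finset.disjoint_sdiff, Finset.union_sdiff_self_eq_union]

theorem exists_norm_le : ∃ c, 0 < c ∧ ∀ n, ‖B.e n‖ ≤ c ∧ ‖B.coord n‖ ≤ c := by
  obtain ⟨c₁, c₂, hc₁, hlow, hhigh⟩ := B.norm_bounds
  exact ⟨c₂, hc₁.trans_le ((hlow 0).1.trans (hhigh 0).1), hhigh⟩

theorem exists_norm_coord_smul_le :
    ∃ c, 0 ≤ c ∧ ∀ n (x : X), ‖B.coord n x • B.e n‖ ≤ c * ‖x‖ := by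
  obtain ⟨c, hc, hbound⟩ := B.exists_norm_le
  refine ⟨c * c, by positivity, fun n x => ?_⟩
  calc ‖B.coord n x • B.e n‖ = ‖B.coord n x‖ * ‖B.e n‖ := norm_smul _ _
    _ ≤ (c * ‖x‖) * c := by
        gcongr
        exacts [(B.coord n).le_of_opNorm_le (hbound n).2 x, (hbound n).1]
    _ = c * c * ‖x‖ := by ring

theorem projSeq_eq_proj_initSeg {seq : ℕ → ℕ} (hseq : Function.Injective seq) (k : ℕ) (x : X) :
    B.projSeq seq k x = B.proj (initSeg seq k) x := by
  rw [projSeq, proj, initSeg, Finset.sum_image fun a _ b _ h => hseq h]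

theorem finite_setOf_le_norm_coord (x : X) {t : ℝ} (ht : 0 < t) :
    {j | t ≤ ‖B.coord j x‖}.Finite := by
  obtain ⟨c, hc, hbound⟩ := B.exists_norm_le
  obtain ⟨y, hy, hxy⟩ := Metric.mem_closure_iff.1 (B.dense_span x) (t / c) (by positivity)
  obtain ⟨a, rfl⟩ := Finsupp.mem_span_range_iff_exists_finsupp.1 hy
  refine a.support.finite_toSet.subset fun j hj => ?_
  by_contra hja
  have hyj : B.coord j (a.sum fun i r => r • B.e i) = 0 := by
    rw [Finsupp.sum, coord_sum, if_neg (Finset.mem_coe.not.1 hja)]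
  have : ‖B.coord j x‖ < t := calc
    ‖B.coord j x‖ = ‖B.coord j (x - a.sum fun i r => r • B.e i)‖ := by rw [map_sub, hyj, sub_zero]
    _ ≤ c * ‖x - a.sum fun i r => r • B.e i‖ := (B.coord j).le_of_opNorm_le (hbound j).2 _
    _ < c * (t / c) := by gcongr; rwa [← dist_eq_norm]
    _ = t := by field_simp
  exact this.not_ge hj

end Coordinates

section Greedy

theorem isGreedySet_sgnSum {η : ℕ → 𝕜} {S F : Finset ℕ} (hη : ∀ n ∈ F, ‖η n‖ = 1)
    (hS : S ⊆ F) : B.IsGreedySet (B.sgnSum η F) S := by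
  intro a ha b _
  rw [coord_sgnSum, coord_sgnSum, if_pos (hS ha), hη a (hS ha)]
  split_ifs with hb
  · rw [hη b hb]
  · simp

theorem IsGreedySet.exists_insert {x : X} {S : Finset ℕ} (hS : B.IsGreedySet x S) :
    ∃ j ∉ S, B.IsGreedySet x (insert j S) := by
  by_cases h : ∃ n ∉ S, B.coord n x ≠ 0
  · obtain ⟨n₀, hn₀S, hn₀⟩ := h
    set F := (B.finite_setOf_le_norm_coord x (norm_pos_iff.2 hn₀)).toFinset \ S
    obtain ⟨j, hjF, hjmax⟩ :=
      F.exists_max_image (fun n => ‖B.coord n x‖) ⟨n₀, by simp [F, hn₀S]⟩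
    simp only [F, Finset.mem_sdiff, Set.Finite.mem_toFinset, Set.mem_ofPred_eq] at hjF hjmax
    refine ⟨j, hjF.2, fun a ha b hb => ?_⟩
    rw [Finset.mem_insert, not_or] at hb
    rcases Finset.mem_insert.1 ha with rfl | haS
    · by_cases hbig : ‖B.coord n₀ x‖ ≤ ‖B.coord b x‖
      · exact hjmax b ⟨hbig, hb.2⟩
      · exact (lt_of_not_ge hbig).le.trans hjF.1
    · exact hS a haS b hb.2
  · push Not at h
    obtain ⟨j, hj⟩ := S.exists_notMem
    refine ⟨j, hj, fun a _ b hb => ?_⟩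
    rw [h b fun hbS => hb (Finset.mem_insert_of_mem hbS), norm_zero]
    exact norm_nonneg _

theorem IsGreedySet.exists_superset_card_eq {x : X} {S : Finset ℕ} (hS : B.IsGreedySet x S)
    (r : ℕ) : ∃ S', S ⊆ S' ∧ S'.card = S.card + r ∧ B.IsGreedySet x S' := by
  induction r with
  | zero => exact ⟨S, subset_rfl, rfl, hS⟩
  | succ r ih =>
    obtain ⟨S', hSS', hcard, hS'⟩ := ih
    obtain ⟨j, hj, hjS'⟩ := hS'.exists_insert
    exact ⟨insert j S', hSS'.trans (Finset.subset_insert j S'),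
      by rw [Finset.card_insert_of_notMem hj, hcard, add_assoc], hjS'⟩

end Greedy

section QuasiGreedy

variable {C : ℝ}

theorem QuasiGreedy.exists_nonneg (h : B.QuasiGreedy) : ∃ C, 0 ≤ C ∧ B.QuasiGreedyWith C := by
  obtain ⟨C, hC⟩ := h
  exact ⟨max C 0, le_max_right _ _, fun x A hA hgr =>
    (hC x A hA hgr).trans (by gcongr; exact le_max_left _ _)⟩

theorem QuasiGreedyWith.norm_proj_le (hC : 0 ≤ C) (hQ : B.QuasiGreedyWith C) {x : X}
    {A : Finset ℕ} (hA : B.IsGreedySet x A) : ‖B.proj A x‖ ≤ C * ‖x‖ := by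
  rcases A.eq_empty_or_nonempty with rfl | hne
  · simp only [proj, Finset.sum_empty, norm_zero]
    positivity
  · exact hQ x A hne hA

/-- Abel summation along the level sets of `w`: removing the elements where `w` is maximal
splits off a multiple of the quasi-greedy projection `P_G z`, and the multiples add up to
at most `β - γ`. -/
theorem QuasiGreedyWith.norm_sum_smul_sub_le (hC : 0 ≤ C) (hQ : B.QuasiGreedyWith C) (z : X)
    (w : ℕ → ℝ) {γ : ℝ} (G : Finset ℕ) {β : ℝ}
    (hgr : ∀ s, B.IsGreedySet z (G.filter (w · < s))) (hw : ∀ g ∈ G, γ ≤ w g ∧ w g ≤ β)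
    (hγβ : γ ≤ β) :
    ‖∑ g ∈ G, (w g : 𝕜) • (B.coord g z • B.e g) - (β : 𝕜) • B.proj G z‖ ≤
      (β - γ) * (C * ‖z‖) := by
  induction G using Finset.strongInduction generalizing β with
  | H G ih =>
  rcases G.eq_empty_or_nonempty with rfl | hne
  · simp only [Finset.sum_empty, proj, smul_zero, sub_zero, norm_zero]
    exact mul_nonneg (sub_nonneg.2 hγβ) (by positivity)
  obtain ⟨g, hg, hgM⟩ := G.exists_mem_eq_sup' hne w
  set M := G.sup' hne w
  set G' := G.filter (w · < M)
  have hsplit : ∑ n ∈ G, (w n : 𝕜) • (B.coord n z • B.e n) =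
      ∑ n ∈ G', (w n : 𝕜) • (B.coord n z • B.e n) + (M : 𝕜) • B.proj (G.filter (¬ w · < M)) z := by
    rw [← Finset.sum_filter_add_sum_filter_not G (w · < M), proj, Finset.smul_sum]
    congr 1
    refine Finset.sum_congr rfl fun n hn => ?_
    rw [Finset.mem_filter, not_lt] at hn
    rw [le_antisymm (G.le_sup' w hn.1) hn.2]
  have hproj : B.proj G z = B.proj G' z + B.proj (G.filter (¬ w · < M)) z := by
    rw [proj, proj, proj, Finset.sum_filter_add_sum_filter_not]
  have hIH := ih G' (Finset.filter_ssubset.2 ⟨g, hg, by simp [hgM]⟩)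
    (fun s => by simpa only [G', Finset.filter_filter, lt_min_iff, and_comm] using hgr (min s M))
    (fun n hn => ⟨(hw n (Finset.mem_filter.1 hn).1).1, (Finset.mem_filter.1 hn).2.le⟩)
    ((hw g hg).1.trans hgM.ge)
  have hG : ‖B.proj G z‖ ≤ C * ‖z‖ := by
    refine hQ.norm_proj_le hC ?_
    simpa [Finset.filter_true_of_mem fun n hn => (G.le_sup' w hn).trans_lt (lt_add_one M)]
      using hgr (M + 1)
  have hMβ : M ≤ β := G.sup'_le hne w fun n hn => (hw n hn).2
  calc _ = ‖(∑ n ∈ G', (w n : 𝕜) • (B.coord n z • B.e n) - (M : 𝕜) • B.proj G' z) +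
        ((M - β : ℝ) : 𝕜) • B.proj G z‖ := by
        rw [hsplit, hproj]
        congr 1
        push_cast
        module
    _ ≤ (M - γ) * (C * ‖z‖) + (β - M) * (C * ‖z‖) := by
        refine norm_add_le_of_le hIH ?_
        rw [norm_smul, RCLike.norm_ofReal, abs_of_nonpos (sub_nonpos.2 hMβ), neg_sub]
        gcongr
    _ = (β - γ) * (C * ‖z‖) := by ring

theorem QuasiGreedyWith.norm_sum_real_smul_le (hC : 0 ≤ C) (hQ : B.QuasiGreedyWith C)
    {G : Finset ℕ} {δ : ℕ → 𝕜} (hδ : ∀ n ∈ G, ‖δ n‖ = 1) (r : ℕ → ℝ)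
    (hr : ∀ n ∈ G, |r n| ≤ 1) :
    ‖∑ n ∈ G, (r n : 𝕜) • (δ n • B.e n)‖ ≤ (1 + 2 * C) * ‖B.sgnSum δ G‖ := by
  set z := B.sgnSum δ G
  have key := hQ.norm_sum_smul_sub_le hC z r G (γ := -1) (β := 1)
    (fun _ => isGreedySet_sgnSum hδ (Finset.filter_subset _ _)) (fun n hn => abs_le.1 (hr n hn))
    (by norm_num)
  have hsum : ∑ n ∈ G, (r n : 𝕜) • (B.coord n z • B.e n) =
      ∑ n ∈ G, (r n : 𝕜) • (δ n • B.e n) :=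
    Finset.sum_congr rfl fun n hn => by rw [coord_sgnSum, if_pos hn]
  rw [hsum, proj_sgnSum, Finset.inter_self, RCLike.ofReal_one, one_smul] at key
  linarith [norm_sub_norm_le (∑ n ∈ G, (r n : 𝕜) • (δ n • B.e n)) z]

theorem QuasiGreedyWith.norm_sum_mul_smul_le (hC : 0 ≤ C) (hQ : B.QuasiGreedyWith C)
    {G : Finset ℕ} {δ : ℕ → 𝕜} (hδ : ∀ n ∈ G, ‖δ n‖ = 1) (a : ℕ → 𝕜)
    (ha : ∀ n ∈ G, ‖a n‖ ≤ 1) :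
    ‖∑ n ∈ G, (a n * δ n) • B.e n‖ ≤ 2 * (1 + 2 * C) * ‖B.sgnSum δ G‖ := by
  have hre := hQ.norm_sum_real_smul_le hC hδ (fun n => RCLike.re (a n))
    fun n hn => (RCLike.abs_re_le_norm _).trans (ha n hn)
  have him := hQ.norm_sum_real_smul_le hC hδ (fun n => RCLike.im (a n))
    fun n hn => (RCLike.abs_im_le_norm _).trans (ha n hn)
  have hsplit : ∑ n ∈ G, (a n * δ n) • B.e n =
      ∑ n ∈ G, (RCLike.re (a n) : 𝕜) • (δ n • B.e n) +
        (RCLike.I : 𝕜) • ∑ n ∈ G, (RCLike.im (a n) : 𝕜) • (δ n • B.e n) := by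
    rw [Finset.smul_sum, ← Finset.sum_add_distrib]
    refine Finset.sum_congr rfl fun n _ => ?_
    conv_lhs => rw [← RCLike.re_add_im (a n)]
    simp only [smul_smul, ← add_smul]
    ring_nf
  have hI : ‖(RCLike.I : 𝕜)‖ ≤ 1 := by
    rw [RCLike.norm_I]
    split_ifs <;> norm_num
  rw [hsplit]
  calc _ ≤ ‖∑ n ∈ G, (RCLike.re (a n) : 𝕜) • (δ n • B.e n)‖ +
        ‖(RCLike.I : 𝕜)‖ * ‖∑ n ∈ G, (RCLike.im (a n) : 𝕜) • (δ n • B.e n)‖ :=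
        (norm_add_le _ _).trans_eq (by rw [norm_smul])
    _ ≤ (1 + 2 * C) * ‖B.sgnSum δ G‖ + 1 * ((1 + 2 * C) * ‖B.sgnSum δ G‖) := by gcongr
    _ = 2 * (1 + 2 * C) * ‖B.sgnSum δ G‖ := by ring

theorem QuasiGreedyWith.norm_sum_smul_le_of_subset (hC : 0 ≤ C) (hQ : B.QuasiGreedyWith C)
    {F G : Finset ℕ} (hFG : F ⊆ G) {δ : ℕ → 𝕜} (hδ : ∀ n ∈ G, ‖δ n‖ = 1) (b : ℕ → 𝕜)
    {t : ℝ} (ht : 0 ≤ t) (hb : ∀ n ∈ F, ‖b n‖ ≤ t) :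
    ‖∑ n ∈ F, b n • B.e n‖ ≤ 2 * (1 + 2 * C) * t * ‖B.sgnSum δ G‖ := by
  rcases ht.eq_or_lt with rfl | ht
  · rw [Finset.sum_eq_zero fun n hn => by rw [norm_le_zero_iff.1 (hb n hn), zero_smul]]
    simp
  have hδ0 : ∀ n ∈ G, δ n ≠ 0 := fun n hn => norm_ne_zero_iff.1 (by rw [hδ n hn]; exact one_ne_zero)
  set a : ℕ → 𝕜 := fun n => if n ∈ F then b n / ((t : 𝕜) * δ n) else 0
  have haF : ∀ n ∈ F, a n = b n / ((t : 𝕜) * δ n) := fun n hn => if_pos hn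
  have ha : ∀ n ∈ G, ‖a n‖ ≤ 1 := by
    intro n hn
    by_cases hnF : n ∈ F
    · rw [haF n hnF, norm_div, norm_mul, RCLike.norm_ofReal, abs_of_pos ht, hδ n hn, mul_one]
      exact div_le_one_of_le₀ (hb n hnF) ht.le
    · simp [a, hnF]
  have hsum : ∑ n ∈ F, b n • B.e n = (t : 𝕜) • ∑ n ∈ G, (a n * δ n) • B.e n := by
    rw [Finset.smul_sum, ← Finset.sum_subset hFG fun n _ hn => by simp [a, hn]]
    refine Finset.sum_congr rfl fun n hn => ?_
    rw [smul_smul, haF n hn]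
    field_simp [hδ0 n (hFG hn), (RCLike.ofReal_ne_zero (K := 𝕜)).2 ht.ne']
  rw [hsum, norm_smul, RCLike.norm_ofReal, abs_of_pos ht]
  calc t * ‖∑ n ∈ G, (a n * δ n) • B.e n‖ ≤ t * (2 * (1 + 2 * C) * ‖B.sgnSum δ G‖) := by
        gcongr
        exact hQ.norm_sum_mul_smul_le hC hδ a ha
    _ = 2 * (1 + 2 * C) * t * ‖B.sgnSum δ G‖ := by ring

theorem QuasiGreedyWith.mul_norm_sgnSum_le (hC : 0 ≤ C) (hQ : B.QuasiGreedyWith C) {z : X}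
    {F : Finset ℕ} (hF : B.IsGreedySet z F) {t : ℝ} (ht : 0 < t)
    (htF : ∀ n ∈ F, t ≤ ‖B.coord n z‖) :
    t * ‖B.sgnSum (fun n => ((‖B.coord n z‖⁻¹ : ℝ) : 𝕜) * B.coord n z) F‖ ≤ 2 * C * ‖z‖ := by
  have hpos : ∀ n ∈ F, 0 < ‖B.coord n z‖ := fun n hn => ht.trans_le (htF n hn)
  have hgr : ∀ s, B.IsGreedySet z (F.filter fun n => ‖B.coord n z‖⁻¹ < s) := by
    intro s a ha b hb
    rw [Finset.mem_filter] at ha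
    by_cases hbF : b ∈ F
    · have hbs : s ≤ ‖B.coord b z‖⁻¹ := not_lt.1 fun h => hb (Finset.mem_filter.2 ⟨hbF, h⟩)
      exact ((inv_lt_inv₀ (hpos a ha.1) (hpos b hbF)).1 (ha.2.trans_le hbs)).le
    · exact hF a ha.1 b hbF
  have key := hQ.norm_sum_smul_sub_le hC z (fun n => ‖B.coord n z‖⁻¹) F (γ := 0) (β := t⁻¹) hgr
    (fun n hn => ⟨by positivity, inv_anti₀ ht (htF n hn)⟩) (by positivity)
  have hsum : ∑ n ∈ F, ((‖B.coord n z‖⁻¹ : ℝ) : 𝕜) • (B.coord n z • B.e n) =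
      B.sgnSum (fun n => ((‖B.coord n z‖⁻¹ : ℝ) : 𝕜) * B.coord n z) F := by
    simp only [sgnSum, smul_smul]
  rw [hsum, sub_zero] at key
  have hproj : ‖((t⁻¹ : ℝ) : 𝕜) • B.proj F z‖ ≤ t⁻¹ * (C * ‖z‖) := by
    rw [norm_smul, RCLike.norm_ofReal, abs_of_pos (inv_pos.2 ht)]
    gcongr
    exact hQ.norm_proj_le hC hF
  calc _ ≤ t * (t⁻¹ * (C * ‖z‖) + t⁻¹ * (C * ‖z‖)) := by
        gcongr
        exact (norm_le_norm_sub_add _ _).trans (add_le_add key hproj)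
    _ = 2 * C * ‖z‖ := by field_simp; ring

theorem QuasiGreedyWith.mul_norm_ones_le (hC : 0 ≤ C) (hQ : B.QuasiGreedyWith C) {z : X}
    {E F : Finset ℕ} (hEF : E ⊆ F) (hF : B.IsGreedySet z F) {t : ℝ}
    (htF : ∀ n ∈ F, t ≤ ‖B.coord n z‖) :
    t * ‖B.ones E‖ ≤ 2 * (1 + 2 * C) * (2 * C) * ‖z‖ := by
  rcases le_or_gt t 0 with ht | ht
  · exact (mul_nonpos_of_nonpos_of_nonneg ht (norm_nonneg _)).trans (by positivity)
  set σ : ℕ → 𝕜 := fun n => ((‖B.coord n z‖⁻¹ : ℝ) : 𝕜) * B.coord n z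
  have hσ : ∀ n ∈ F, ‖σ n‖ = 1 := fun n hn => by
    rw [norm_mul, RCLike.norm_ofReal, abs_inv, abs_norm,
      inv_mul_cancel₀ (ht.trans_le (htF n hn)).ne']
  have hflip := hQ.norm_sum_smul_le_of_subset hC hEF hσ (fun _ => 1) zero_le_one
    fun _ _ => norm_one.le
  simp only [one_smul, mul_one] at hflip
  calc t * ‖B.ones E‖ ≤ t * (2 * (1 + 2 * C) * ‖B.sgnSum σ F‖) := by gcongr; exact hflip
    _ = 2 * (1 + 2 * C) * (t * ‖B.sgnSum σ F‖) := by ring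
    _ ≤ 2 * (1 + 2 * C) * (2 * C * ‖z‖) :=
        mul_le_mul_of_nonneg_left (hQ.mul_norm_sgnSum_le hC hF ht htF) (by positivity)
    _ = 2 * (1 + 2 * C) * (2 * C) * ‖z‖ := by ring

end QuasiGreedy

section Implications

variable {seq : ℕ → ℕ} {lam : ℝ}

theorem LamSPG.quasiGreedy (hlam : 0 < lam) (h : B.LamSPG seq lam) : B.QuasiGreedy := by
  obtain ⟨C, -, hS⟩ := h
  obtain ⟨c, hc, hcx⟩ := B.exists_norm_coord_smul_le
  refine ⟨1 + C + ⌈lam⌉₊ * c, fun x A hne hA => ?_⟩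
  obtain ⟨m, hm, hAm, hmA⟩ := exists_le_ceil_mul_le hlam (Finset.card_pos.2 hne)
  obtain ⟨A', hAA', hcard, hA'⟩ := hA.exists_superset_card_eq (⌈lam * m⌉₊ - A.card)
  have hsupp := hS x m hm A' (by omega) hA' 0 m.zero_le
  rw [projSeq, Finset.sum_range_zero, sub_zero] at hsupp
  have hrest : ‖B.proj (A' \ A) x‖ ≤ ⌈lam⌉₊ * c * ‖x‖ :=
    calc ‖B.proj (A' \ A) x‖ ≤ ∑ _n ∈ A' \ A, c * ‖x‖ := norm_sum_le_of_le _ fun n _ => hcx n x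
      _ = (A' \ A).card * (c * ‖x‖) := by rw [Finset.sum_const, nsmul_eq_mul]
      _ ≤ ⌈lam⌉₊ * (c * ‖x‖) := by
          gcongr
          rw [Finset.card_sdiff_of_subset hAA']
          exact_mod_cast (by omega : A'.card - A.card ≤ ⌈lam⌉₊)
      _ = ⌈lam⌉₊ * c * ‖x‖ := by ring
  have hsplit : B.proj A x + B.proj (A' \ A) x = B.proj A' x := by
    rw [proj_add_proj_sdiff, Finset.union_eq_right.2 hAA']
  have hdecomp : B.proj A x = x - (x - B.proj A' x) - B.proj (A' \ A) x := by
    rw [← hsplit]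
    abel
  rw [hdecomp]
  calc _ ≤ ‖x‖ + ‖x - B.proj A' x‖ + ‖B.proj (A' \ A) x‖ :=
        norm_sub_le_of_le (norm_sub_le _ _) le_rfl
    _ ≤ ‖x‖ + C * ‖x‖ + ⌈lam⌉₊ * c * ‖x‖ := by gcongr
    _ = (1 + C + ⌈lam⌉₊ * c) * ‖x‖ := by ring

theorem LamPSLC.lamSuperconservative (h : B.LamPSLC seq lam) :
    B.LamSuperconservative seq lam := by
  obtain ⟨C, hC, hp⟩ := h
  refine ⟨C, by linarith, fun A D hAD hlc ε δ hε hδ => ?_⟩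
  simpa using hp 0 (by simp) A D hAD.1 hAD.2.1 hlc (by simp)
    (fun a ha j hj hjseq => hAD.2.2 a ha j (by simpa using hj) hjseq) ε δ hε hδ

theorem LamSuperconservative.lamConservative (h : B.LamSuperconservative seq lam) :
    B.LamConservative seq lam := by
  obtain ⟨C, hC, hsc⟩ := h
  refine ⟨C, hC, fun A D hAD hlc => ?_⟩
  simpa only [sgnSum_one] using hsc A D hAD hlc (fun _ => 1) (fun _ => 1) (by simp) (by simp)

theorem LamSuperconservative.lamPSLC (h : B.LamSuperconservative seq lam)
    (hqg : B.QuasiGreedy) : B.LamPSLC seq lam := by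
  obtain ⟨CQ, hCQ, hQ⟩ := hqg.exists_nonneg
  obtain ⟨Cs, hCs, hsc⟩ := h
  refine ⟨1 + CQ + Cs * CQ, by nlinarith,
    fun x hx A D hAseq hcard hlc hDx hAorder ε δ hε hδ => ?_⟩
  set v := x + B.sgnSum δ D
  have hcoord : ∀ n, B.coord n v = B.coord n x + if n ∈ D then δ n else 0 := fun n => by
    rw [map_add, coord_sgnSum]
  have hDv : B.IsGreedySet v D := by
    intro a ha b hb
    rw [hcoord, hcoord, if_pos ha, if_neg hb, hDx a ha, zero_add, add_zero, hδ]
    exact hx b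
  have hprojD : B.proj D v = B.sgnSum δ D :=
    Finset.sum_congr rfl fun n hn => by rw [hcoord, if_pos hn, hDx n hn, zero_add]
  have hD : ‖B.sgnSum δ D‖ ≤ CQ * ‖v‖ := hprojD ▸ hQ.norm_proj_le hCQ hDv
  have hA : ‖B.sgnSum ε A‖ ≤ Cs * ‖B.sgnSum δ D‖ :=
    hsc A D ⟨hAseq, hcard, fun a ha d hd => hAorder a ha d (Or.inl hd)⟩ hlc ε δ hε hδ
  have hx' : ‖x‖ ≤ (1 + CQ) * ‖v‖ := by
    have := norm_sub_le v (B.sgnSum δ D)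
    rw [add_sub_cancel_right] at this
    linarith
  calc ‖x + B.sgnSum ε A‖ ≤ ‖x‖ + ‖B.sgnSum ε A‖ := norm_add_le _ _
    _ ≤ (1 + CQ) * ‖v‖ + Cs * (CQ * ‖v‖) := add_le_add hx' (hA.trans (by gcongr))
    _ = (1 + CQ + Cs * CQ) * ‖v‖ := by ring

theorem LamSPG.lamSuperconservative (hseq : StrictMono seq) (hlam : 1 ≤ lam)
    (h : B.LamSPG seq lam) : B.LamSuperconservative seq lam := by
  obtain ⟨CQ, hCQ, hQ⟩ := (h.quasiGreedy (by linarith)).exists_nonneg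
  obtain ⟨C, hC, hS⟩ := h
  refine ⟨CQ * C + 1, by positivity, fun A D hAD hlc ε δ hε hδ => ?_⟩
  obtain ⟨hAseq, -, hAD⟩ := hAD
  rcases A.eq_empty_or_nonempty with rfl | hne
  · simp only [sgnSum, Finset.sum_empty, norm_zero]
    positivity
  set k := iotaMax seq A
  set Abar := initSeg seq k
  have hAAbar : A ⊆ Abar := subset_initSeg_iotaMax hseq hAseq
  have hAk : A.card ≤ k := card_initSeg hseq k ▸ Finset.card_le_card hAAbar
  have hDAbar : Disjoint Abar D := Finset.disjoint_left.2 fun b hb hbD => by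
    obtain ⟨a, ha, hba⟩ := exists_ge_of_mem_initSeg_iotaMax hseq hAseq hb
    obtain ⟨i, -, hi⟩ := mem_initSeg.1 hb
    exact hba.not_gt (hAD a ha b hbD ⟨i, hi⟩)
  have hAD' : Disjoint A D := Finset.disjoint_of_subset_left hAAbar hDAbar
  have hD₀ : ⌈(lam - 1) * k⌉₊ + A.card ≤ D.card := by
    rw [← Nat.ceil_add_natCast (mul_nonneg (sub_nonneg.2 hlam) k.cast_nonneg), Nat.ceil_le]
    exact_mod_cast hlc
  obtain ⟨D₀, hD₀D, hD₀card⟩ := Finset.exists_subset_card_eq hD₀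
  set η : ℕ → 𝕜 := fun n => if n ∈ D then δ n else if n ∈ A then ε n else 1
  have hη : ∀ n ∈ Abar ∪ D, ‖η n‖ = 1 := fun n _ => by
    simp only [η]
    split_ifs <;> simp [hε, hδ]
  set y := B.sgnSum η (Abar ∪ D)
  set S := (Abar \ A) ∪ D₀
  have hScard : S.card = ⌈lam * k⌉₊ := by
    rw [Finset.card_union_of_disjoint (hDAbar.mono Finset.sdiff_subset hD₀D),
      Finset.card_sdiff_of_subset hAAbar, card_initSeg hseq, hD₀card,
      ceil_mul_eq_ceil_sub_one_mul_add hlam]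
    omega
  have hspg := hS y k (Finset.card_pos.2 hne |>.trans_le hAk) S hScard
    (isGreedySet_sgnSum hη (Finset.union_subset_union Finset.sdiff_subset hD₀D)) k le_rfl
  have hrhs : y - B.projSeq seq k y = B.sgnSum δ D := by
    rw [projSeq_eq_proj_initSeg hseq.injective, sgnSum_sub_proj_sgnSum,
      Finset.union_sdiff_left, Finset.sdiff_eq_self_of_disjoint hDAbar.symm]
    exact Finset.sum_congr rfl fun n hn => by simp [η, hn]
  have hAS : A ⊆ (Abar ∪ D) \ S := fun a ha => by
    have haD : a ∉ D := Finset.disjoint_left.1 hAD' ha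
    simp [S, ha, hAAbar ha, haD, mt (@hD₀D a) haD]
  have hprojA : B.proj A (y - B.proj S y) = B.sgnSum ε A := by
    rw [sgnSum_sub_proj_sgnSum, proj_sgnSum, Finset.inter_eq_left.2 hAS]
    exact Finset.sum_congr rfl fun n hn => by simp [η, hn, Finset.disjoint_left.1 hAD' hn]
  calc ‖B.sgnSum ε A‖ = ‖B.proj A (y - B.proj S y)‖ := by rw [hprojA]
    _ ≤ CQ * ‖y - B.proj S y‖ := by
        refine hQ.norm_proj_le hCQ ?_
        rw [sgnSum_sub_proj_sgnSum]
        exact isGreedySet_sgnSum (fun n hn => hη n (Finset.sdiff_subset hn)) hAS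
    _ ≤ CQ * (C * ‖y - B.projSeq seq k y‖) := by gcongr
    _ ≤ (CQ * C + 1) * ‖B.sgnSum δ D‖ := by
        rw [hrhs, ← mul_assoc]
        gcongr
        linarith

theorem LamConservative.lamSPG (hseq : StrictMono seq) (hlam : 1 ≤ lam)
    (h : B.LamConservative seq lam) (hqg : B.QuasiGreedy) : B.LamSPG seq lam := by
  obtain ⟨CQ, hCQ, hQ⟩ := hqg.exists_nonneg
  obtain ⟨Cc, hCc, hcons⟩ := h
  set K := 2 * (1 + 2 * CQ)
  refine ⟨1 + CQ + K * Cc * (K * (2 * CQ)), le_add_of_le_of_nonneg (by linarith) (by positivity),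
    fun x m hm A hA hgr k hkm => ?_⟩
  rw [projSeq_eq_proj_initSeg hseq.injective]
  set z := x - B.proj (initSeg seq k) x
  set F := A \ initSeg seq k
  set G := initSeg seq k \ A
  have hAne : A.Nonempty := by
    rw [← Finset.card_pos, hA, Nat.ceil_pos]
    have : (0 : ℝ) < m := by exact_mod_cast hm
    positivity
  obtain ⟨a₀, ha₀, hmin⟩ := A.exists_min_image (‖B.coord · x‖) hAne
  have hzF : ∀ n ∈ F, B.coord n z = B.coord n x := fun n hn => by
    rw [map_sub, coord_proj, if_neg (Finset.mem_sdiff.1 hn).2, sub_zero]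
  have hF : B.IsGreedySet z F := by
    intro a ha b hb
    rw [hzF a ha, map_sub, coord_proj]
    split_ifs with hbk
    · simp
    · rw [sub_zero]
      exact hgr a (Finset.mem_sdiff.1 ha).1 b fun hbA => hb (Finset.mem_sdiff.2 ⟨hbA, hbk⟩)
  have hdecomp : x - B.proj A x = (z - B.proj F z) + B.proj G x := by
    have h : B.proj A x + B.proj G x = B.proj (initSeg seq k) x + B.proj F x := by
      rw [proj_add_proj_sdiff, proj_add_proj_sdiff, Finset.union_comm]
    rw [proj_sub_proj, Finset.sdiff_idem, eq_sub_of_add_eq h]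
    simp only [z, F]
    abel
  obtain ⟨E, hEF, hGE, hlc⟩ := exists_subset_sdiff_initSeg_tPair hseq hlam hkm hA
  have hterm1 : ‖z - B.proj F z‖ ≤ (1 + CQ) * ‖z‖ := by
    linarith [norm_sub_le z (B.proj F z), hQ.norm_proj_le hCQ hF]
  set t := ‖B.coord a₀ x‖
  have hterm2 : ‖B.proj G x‖ ≤ K * Cc * (K * (2 * CQ)) * ‖z‖ :=
    calc ‖B.proj G x‖ ≤ K * t * ‖B.sgnSum (fun _ => 1) G‖ :=
          hQ.norm_sum_smul_le_of_subset hCQ subset_rfl (fun _ _ => norm_one) _ (norm_nonneg _)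
            fun n hn => hgr a₀ ha₀ n (Finset.mem_sdiff.1 hn).2
      _ ≤ K * t * (Cc * ‖B.ones E‖) := by
          rw [sgnSum_one]
          gcongr
          exact hcons G E hGE hlc
      _ = K * Cc * (t * ‖B.ones E‖) := by ring
      _ ≤ K * Cc * (K * (2 * CQ) * ‖z‖) :=
          mul_le_mul_of_nonneg_left (hQ.mul_norm_ones_le hCQ hEF hF fun n hn =>
            hzF n hn ▸ hmin n (Finset.mem_sdiff.1 hn).1) (by positivity)
      _ = K * Cc * (K * (2 * CQ)) * ‖z‖ := by ring
  rw [hdecomp]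
  calc _ ≤ (1 + CQ) * ‖z‖ + K * Cc * (K * (2 * CQ)) * ‖z‖ := norm_add_le_of_le hterm1 hterm2
    _ = (1 + CQ + K * Cc * (K * (2 * CQ))) * ‖z‖ := by ring

end Implications
end BasisOf

theorem statement18_general {𝕜 X : Type*} [RCLike 𝕜] [NormedAddCommGroup X] [NormedSpace 𝕜 X]
    (B : BasisOf 𝕜 X) (seq : ℕ → ℕ) (hseq : StrictMono seq)
    (lam : ℝ) (hlam : 1 < lam) :
    (B.LamSPG seq lam ↔ B.QuasiGreedy ∧ B.LamPSLC seq lam) ∧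
    (B.LamSPG seq lam ↔ B.QuasiGreedy ∧ B.LamSuperconservative seq lam) ∧
    (B.LamSPG seq lam ↔ B.QuasiGreedy ∧ B.LamConservative seq lam) := by
  have hqg (h : B.LamSPG seq lam) : B.QuasiGreedy := h.quasiGreedy (by linarith)
  have hsc (h : B.LamSPG seq lam) : B.LamSuperconservative seq lam :=
    h.lamSuperconservative hseq hlam.le
  exact ⟨⟨fun h => ⟨hqg h, (hsc h).lamPSLC (hqg h)⟩,
      fun ⟨hq, h⟩ => h.lamSuperconservative.lamConservative.lamSPG hseq hlam.le hq⟩,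
    ⟨fun h => ⟨hqg h, hsc h⟩, fun ⟨hq, h⟩ => h.lamConservative.lamSPG hseq hlam.le hq⟩,
    ⟨fun h => ⟨hqg h, (hsc h).lamConservative⟩, fun ⟨hq, h⟩ => h.lamSPG hseq hlam.le hq⟩⟩

/-- For `λ > 1`, being (λ, 𝐧, strong partially greedy) is equivalent to
being quasi-greedy together with any one of: (λ, 𝐧, PSLC), (λ, 𝐧, superconservative),
(λ, 𝐧, conservative). -/
theorem statement18 {𝕜 X : Type*} [RCLike 𝕜] [NormedAddCommGroup X] [NormedSpace 𝕜 X]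
    [CompleteSpace X] (B : BasisOf 𝕜 X) (seq : ℕ → ℕ) (hseq : StrictMono seq)
    (lam : ℝ) (hlam : 1 < lam) :
    (B.LamSPG seq lam ↔ B.QuasiGreedy ∧ B.LamPSLC seq lam) ∧
    (B.LamSPG seq lam ↔ B.QuasiGreedy ∧ B.LamSuperconservative seq lam) ∧
    (B.LamSPG seq lam ↔ B.QuasiGreedy ∧ B.LamConservative seq lam) :=
  statement18_general B seq hseq lam hlam
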